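/- arXiv:1509.08827 — 3 statements merged into one kernel-verified Lean document; each statement's English description precedes it below -/
import Mathlib

section
/- Let F be holomorphic in a neighbourhood of z₀ = ω₀ + it₀ ∈ ℂ with F(z₀) ≠ 0, and define S(t, ω) = e^{−(t²+ω²)/4} F(ω + it). Then the reassignment displacement vector v(t₀, ω₀) = (−t₀/2 − ∂_ω φ, −ω₀/2 + ∂_t φ), where φ is any continuous local argument of S near (t₀, ω₀), satisfies v(t₀, ω₀) = (∂_t log|S|, ∂_ω log|S|) evaluated at (t₀, ω₀); explicitly, −t₀/2 − Im(F'(z₀)/F(z₀)) = ∂_t log|S|(t₀, ω₀) and −ω₀/2 + Re(F'(z₀)/F(z₀)) = ∂_ω log|S|(t₀, ω₀). In particular the displacement vector is the gradient of the logarithmic amplitude of S. -/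
open MeasureTheory Complex

lemma log_abs_eq (w : ℂ) :
    Real.log ‖w‖ = Real.log (w.re ^ 2 + w.im ^ 2) / 2 := by
  rw [Complex.norm_def, Complex.normSq_apply]
  rw [show w.re * w.re + w.im * w.im = w.re ^ 2 + w.im ^ 2 by ring]
  rw [Real.log_sqrt (by positivity)]

lemma aux_hasDerivAt (F : ℂ → ℂ) (z : ℝ → ℂ) (c : ℂ) (x₀ : ℝ)
    (hz : HasDerivAt z c x₀) (hF : DifferentiableAt ℂ F (z x₀))
    (h0 : F (z x₀) ≠ 0) :
    HasDerivAt (fun x => Real.log ‖F (z x)‖)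
      ((deriv F (z x₀) * c / F (z x₀)).re) x₀ := by
  set a := F (z x₀) with ha
  set b := deriv F (z x₀) with hb
  have hu : HasDerivAt (fun x => F (z x)) (c * b) x₀ := by
    have := (hF.hasDerivAt.hasFDerivAt.restrictScalars ℝ).comp_hasDerivAt x₀ hz
    simp [Function.comp, smul_eq_mul] at this
    exact this
  have hre : HasDerivAt (fun x => (F (z x)).re) ((c * b).re) x₀ := by
    have := Complex.reCLM.hasFDerivAt.comp_hasDerivAt x₀ hu
    simp at this
    exact this
  have him : HasDerivAt (fun x => (F (z x)).im) ((c * b).im) x₀ := by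
    have := Complex.imCLM.hasFDerivAt.comp_hasDerivAt x₀ hu
    simp at this
    exact this
  have hn : HasDerivAt (fun x => (F (z x)).re ^ 2 + (F (z x)).im ^ 2)
      (2 * a.re * (c * b).re + 2 * a.im * (c * b).im) x₀ := by
    have := (hre.pow 2).add (him.pow 2)
    simp at this
    exact this
  have hne : a.re ^ 2 + a.im ^ 2 ≠ 0 := by
    have := Complex.normSq_pos.mpr h0
    simp only [Complex.normSq_apply] at this
    nlinarith
  have hlog := (hn.log hne).div_const 2
  have hfun : (fun x => Real.log ‖F (z x)‖)
      = fun x => Real.log ((F (z x)).re ^ 2 + (F (z x)).im ^ 2) / 2 := by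
    funext x; exact log_abs_eq _
  rw [hfun]
  refine hlog.congr_deriv ?_
  have hd : (b * c / a).re = ((b * c).re * a.re + (b * c).im * a.im) / (a.re ^ 2 + a.im ^ 2) := by
    rw [Complex.div_re, Complex.normSq_apply]; ring
  rw [hd]
  rw [← ha]
  field_simp [hne]

/-- For a spectrogram of the form `S(t,ω) = e^{−(t²+ω²)/4} F(ω+it)` with `F` holomorphic
near `z₀ = ω₀ + it₀` and `F(z₀) ≠ 0`, the reassignment displacement vector
`v(t₀,ω₀) = (−t₀/2 − ∂_ω φ, −ω₀/2 + ∂_t φ)` equals the gradient of the logarithmic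
amplitude: `−t₀/2 − Im(F'(z₀)/F(z₀)) = ∂_t log|S|(t₀,ω₀)` and
`−ω₀/2 + Re(F'(z₀)/F(z₀)) = ∂_ω log|S|(t₀,ω₀)`. -/
theorem displacement_is_grad_log_amplitude (F : ℂ → ℂ) (t₀ ω₀ : ℝ)
    (hF : ∀ᶠ z in nhds ((ω₀ : ℂ) + Complex.I * t₀), DifferentiableAt ℂ F z)
    (hF0 : F ((ω₀ : ℂ) + Complex.I * t₀) ≠ 0)
    (S : ℝ → ℝ → ℂ)
    (hS : ∀ t ω : ℝ, S t ω =
      (Real.exp (-(t ^ 2 + ω ^ 2) / 4) : ℝ) * F ((ω : ℂ) + Complex.I * t)) :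
    (-t₀ / 2 - (deriv F ((ω₀ : ℂ) + Complex.I * t₀) / F ((ω₀ : ℂ) + Complex.I * t₀)).im
        = deriv (fun t : ℝ => Real.log (‖S t ω₀‖)) t₀) ∧
    (-ω₀ / 2 + (deriv F ((ω₀ : ℂ) + Complex.I * t₀) / F ((ω₀ : ℂ) + Complex.I * t₀)).re
        = deriv (fun ω : ℝ => Real.log (‖S t₀ ω‖)) ω₀) := by
  set z₀ : ℂ := (ω₀ : ℂ) + Complex.I * t₀ with hz₀
  have hFd : DifferentiableAt ℂ F z₀ := hF.self_of_nhds
  -- eventual nonvanishing along each curve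
  have hFne : ∀ᶠ w in nhds z₀, F w ≠ 0 := hFd.continuousAt.eventually_ne hF0
  constructor
  · -- t direction: curve z t = ω₀ + I t, derivative I
    have hz : HasDerivAt (fun t : ℝ => (ω₀ : ℂ) + Complex.I * t) Complex.I t₀ := by
      simpa using ((Complex.ofRealCLM.hasDerivAt (x := t₀)).const_mul Complex.I).const_add (ω₀ : ℂ)
    have key := aux_hasDerivAt F (fun t : ℝ => (ω₀ : ℂ) + Complex.I * t) Complex.I t₀ hz hFd hF0
    have hq : HasDerivAt (fun t : ℝ => -(t ^ 2 + ω₀ ^ 2) / 4) (-t₀ / 2) t₀ := by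
      have := ((hasDerivAt_pow 2 t₀).add_const (ω₀ ^ 2)).neg.div_const 4
      refine this.congr_deriv ?_
      push_cast; ring
    have hsum := hq.add key
    have hev : (fun t : ℝ => -(t ^ 2 + ω₀ ^ 2) / 4 +
        Real.log ‖F ((ω₀ : ℂ) + Complex.I * t)‖)
        =ᶠ[nhds t₀] fun t : ℝ => Real.log ‖S t ω₀‖ := by
      have hc : ContinuousAt (fun t : ℝ => (ω₀ : ℂ) + Complex.I * t) t₀ := hz.continuousAt
      filter_upwards [hc.tendsto.eventually hFne] with t ht
      rw [hS t ω₀, norm_mul, Complex.norm_real, Real.norm_eq_abs, abs_of_pos (Real.exp_pos _),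
        Real.log_mul (Real.exp_ne_zero _) (by simpa using ht), Real.log_exp]
    have := (hsum.congr_of_eventuallyEq hev.symm).deriv
    rw [this]
    simp only [Complex.div_re, Complex.div_im, Complex.mul_re, Complex.mul_im,
      Complex.I_re, Complex.I_im, Complex.normSq_apply]
    ring
  · -- ω direction: curve z ω = ω + I t₀, derivative 1
    have hz : HasDerivAt (fun ω : ℝ => (ω : ℂ) + Complex.I * t₀) 1 ω₀ := by
      simpa using (Complex.ofRealCLM.hasDerivAt (x := ω₀)).add_const (Complex.I * t₀)
    have key := aux_hasDerivAt F (fun ω : ℝ => (ω : ℂ) + Complex.I * t₀) 1 ω₀ hz hFd hF0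
    have hq : HasDerivAt (fun ω : ℝ => -(t₀ ^ 2 + ω ^ 2) / 4) (-ω₀ / 2) ω₀ := by
      have := ((hasDerivAt_pow 2 ω₀).const_add (t₀ ^ 2)).neg.div_const 4
      refine this.congr_deriv ?_
      push_cast; ring
    have hsum := hq.add key
    have hev : (fun ω : ℝ => -(t₀ ^ 2 + ω ^ 2) / 4 +
        Real.log ‖F ((ω : ℂ) + Complex.I * t₀)‖)
        =ᶠ[nhds ω₀] fun ω : ℝ => Real.log ‖S t₀ ω‖ := by
      have hc : ContinuousAt (fun ω : ℝ => (ω : ℂ) + Complex.I * t₀) ω₀ := hz.continuousAt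
      filter_upwards [hc.tendsto.eventually hFne] with ω hω
      rw [hS t₀ ω, norm_mul, Complex.norm_real, Real.norm_eq_abs, abs_of_pos (Real.exp_pos _),
        Real.log_mul (Real.exp_ne_zero _) (by simpa using hω), Real.log_exp]
    have := (hsum.congr_of_eventuallyEq hev.symm).deriv
    rw [this]
    simp [hz₀]
end

section
/- Let κ > 0, μ > 0 and α, β ∈ ℝ, and let g : (0,∞) → ℂ be continuous with compact support. Define, for a > 0 and t ∈ ℝ, W(a,t) = √a ∫₀^∞ g(ω) e^{itω} e^{iα log(aω)} e^{iβ aω} e^{−κ aω} (aω)^{μ − 1/2} dω. Then W is continuously differentiable on (0,∞) × ℝ and satisfies the structure equation a ∂W/∂a (a,t) = (μ + iα) W(a,t) + a(β + iκ) ∂W/∂t (a,t) for all a > 0, t ∈ ℝ. (This is the differential equation satisfied by the wavelet transform taken with an analytic wavelet built from an extremal of the uncertainty relation for the affine group.) -/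
open MeasureTheory Complex Set Metric

noncomputable def PhiAux (c : ℝ → ℂ) (z : ℂ) : ℂ := ∫ ω, c ω * Complex.exp (Complex.I * ω * z)

lemma phiAux_hasDerivAt (c : ℝ → ℂ) (hc : Continuous c) (hcc : HasCompactSupport c) (z₀ : ℂ) :
    HasDerivAt (PhiAux c)
      (∫ ω : ℝ, c ω * (Complex.I * ω) * Complex.exp (Complex.I * ω * z₀)) z₀ := by
  have hcont : ∀ z : ℂ, Continuous (fun ω : ℝ => c ω * Complex.exp (Complex.I * ω * z)) := by
    intro z
    exact hc.mul (Complex.continuous_exp.comp (by fun_prop))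
  have hcont' : ∀ z : ℂ,
      Continuous (fun ω : ℝ => c ω * (Complex.I * ω) * Complex.exp (Complex.I * ω * z)) := by
    intro z
    exact (hc.mul (by fun_prop)).mul (Complex.continuous_exp.comp (by fun_prop))
  set bound : ℝ → ℝ := fun ω => ‖c ω‖ * (|ω| * Real.exp (|ω| * (‖z₀‖ + 1))) with hbdef
  have hbound_cont : Continuous bound := by
    apply hc.norm.mul
    exact continuous_abs.mul (Real.continuous_exp.comp (continuous_abs.mul continuous_const))
  have hbound_supp : HasCompactSupport bound := by
    apply HasCompactSupport.mul_right
    exact hcc.norm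
  have hbound_int : Integrable bound := hbound_cont.integrable_of_hasCompactSupport hbound_supp
  have key := hasDerivAt_integral_of_dominated_loc_of_deriv_le (μ := volume)
    (F := fun z (ω : ℝ) => c ω * Complex.exp (Complex.I * ω * z))
    (F' := fun z (ω : ℝ) => c ω * (Complex.I * ω) * Complex.exp (Complex.I * ω * z))
    (x₀ := z₀) (bound := bound) (ball_mem_nhds z₀ one_pos)
    (Filter.Eventually.of_forall fun z => (hcont z).aestronglyMeasurable)
    (((hcont z₀).integrable_of_hasCompactSupport (hcc.mul_right)))
    ((hcont' z₀).aestronglyMeasurable)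
    (ae_of_all _ fun ω z hz => by
      have h1 : ‖c ω * (Complex.I * ω) * Complex.exp (Complex.I * ω * z)‖
          = ‖c ω‖ * (|ω| * Real.exp ((Complex.I * ω * z).re)) := by
        simp [norm_mul, Complex.norm_exp, Complex.norm_real, mul_assoc]
      rw [h1]
      simp only [hbdef]
      gcongr
      calc (Complex.I * (ω : ℂ) * z).re ≤ |(Complex.I * (ω : ℂ) * z).re| := le_abs_self _
        _ ≤ ‖Complex.I * ω * z‖ := Complex.abs_re_le_norm _
        _ = |ω| * ‖z‖ := by simp [map_mul, Complex.norm_real]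
        _ ≤ |ω| * (‖z₀‖ + 1) := by
            gcongr
            have hzn := mem_ball_iff_norm.mp hz
            calc ‖z‖ = ‖z‖ := rfl
              _ ≤ ‖z₀‖ + ‖z - z₀‖ := by simpa using norm_add_le z₀ (z - z₀)
              _ ≤ ‖z₀‖ + 1 := by linarith
      )
    hbound_int
    (ae_of_all _ fun ω z hz => by
      have : HasDerivAt (fun z : ℂ => Complex.I * ω * z) (Complex.I * ω) z := by
        simpa using (hasDerivAt_id z).const_mul (Complex.I * (ω : ℂ))
      have := (this.cexp).const_mul (c ω)
      convert this using 1
      exacts [rfl, by ring])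
  exact key.2

/-- The wavelet transform taken with an analytic wavelet built from an extremal of the
uncertainty relation for the affine group,
`W(a,t) = √a ∫₀^∞ g(ω) e^{itω} e^{iα log(aω)} e^{iβaω} e^{−κaω} (aω)^{μ−1/2} dω`
(with `g` continuous with compact support in `(0,∞)`), is continuously differentiable
on `(0,∞) × ℝ` and satisfies the structure equation
`a ∂W/∂a = (μ + iα) W + a(β + iκ) ∂W/∂t`. -/
theorem structure_equation_for_extremal_wavelet (κ μ α β : ℝ) (hκ : 0 < κ) (hμ : 0 < μ)
    (g : ℝ → ℂ) (hg : Continuous g) (hgc : HasCompactSupport g)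
    (hgsupp : tsupport g ⊆ Set.Ioi 0)
    (W : ℝ → ℝ → ℂ)
    (hW : ∀ a t : ℝ, W a t = (Real.sqrt a : ℂ) *
      ∫ ω in Set.Ioi (0 : ℝ), g ω * Complex.exp (Complex.I * t * ω) *
        Complex.exp (Complex.I * α * Real.log (a * ω)) *
        Complex.exp (Complex.I * β * (a * ω)) *
        (Real.exp (-κ * (a * ω)) : ℝ) * (((a * ω) ^ (μ - 1 / 2) : ℝ) : ℂ)) :
    ContDiffOn ℝ 1 (fun p : ℝ × ℝ => W p.1 p.2) (Set.Ioi (0 : ℝ) ×ˢ Set.univ) ∧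
    ∀ a : ℝ, 0 < a → ∀ t : ℝ,
      (a : ℂ) * deriv (fun a' : ℝ => W a' t) a
        = ((μ : ℂ) + Complex.I * α) * W a t
          + (a : ℂ) * ((β : ℂ) + Complex.I * κ) * deriv (fun t' : ℝ => W a t') t := by
  -- the "single variable" profile
  set c : ℝ → ℂ := fun ω =>
    g ω * (Complex.exp (Complex.I * α * Real.log ω) * ((ω ^ (μ - 1/2) : ℝ) : ℂ)) with hcdef
  have hgz : ∀ ω : ℝ, ω ∉ Set.Ioi (0:ℝ) → g ω = 0 := by
    intro ω hω
    by_contra h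
    exact hω (hgsupp (subset_tsupport g h))
  have hc : Continuous c := by
    rw [continuous_iff_continuousAt]
    intro x
    by_cases hx : x ∈ tsupport g
    · have hx0 : 0 < x := hgsupp hx
      apply ContinuousAt.mul hg.continuousAt
      apply ContinuousAt.mul
      · exact Complex.continuous_exp.continuousAt.comp
          (ContinuousAt.mul continuousAt_const
            (Complex.continuous_ofReal.continuousAt.comp (Real.continuousAt_log hx0.ne')))
      · exact Complex.continuous_ofReal.continuousAt.comp
          (Real.continuousAt_rpow_const x _ (Or.inl hx0.ne'))
    · have hev : ∀ᶠ y in nhds x, c y = 0 := by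
        filter_upwards [(isClosed_tsupport g).isOpen_compl.mem_nhds hx] with y hy
        have : g y = 0 := image_eq_zero_of_notMem_tsupport hy
        simp [hcdef, this]
      have hcx : c x = 0 := by
        have : g x = 0 := image_eq_zero_of_notMem_tsupport hx
        simp [hcdef, this]
      exact ContinuousAt.congr (continuousAt_const (y := (0:ℂ))) (by
        filter_upwards [hev] with y hy; rw [hy])
  have hcc : HasCompactSupport c := by
    apply HasCompactSupport.mul_right hgc
  -- the pointwise identity
  have key : ∀ a : ℝ, 0 < a → ∀ t : ℝ,
      W a t = ((a ^ μ : ℝ) : ℂ) * Complex.exp (Complex.I * α * Real.log a) *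
        PhiAux c ((t : ℂ) + a * (β + Complex.I * κ)) := by
    intro a ha t
    rw [hW]
    have hinteq : (∫ ω in Set.Ioi (0 : ℝ), g ω * Complex.exp (Complex.I * t * ω) *
        Complex.exp (Complex.I * α * Real.log (a * ω)) *
        Complex.exp (Complex.I * β * (a * ω)) *
        (Real.exp (-κ * (a * ω)) : ℝ) * (((a * ω) ^ (μ - 1 / 2) : ℝ) : ℂ))
        = (Complex.exp (Complex.I * α * Real.log a) * ((a ^ (μ - 1/2) : ℝ) : ℂ)) *
          ∫ ω in Set.Ioi (0 : ℝ), c ω * Complex.exp (Complex.I * ω *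
            ((t : ℂ) + a * (β + Complex.I * κ))) := by
      rw [← MeasureTheory.integral_const_mul]
      apply MeasureTheory.setIntegral_congr_fun measurableSet_Ioi
      intro ω hω
      have hω0 : (0:ℝ) < ω := hω
      have hlog : Real.log (a * ω) = Real.log a + Real.log ω := Real.log_mul ha.ne' hω0.ne'
      have hrpow : (a * ω) ^ (μ - 1/2) = a ^ (μ - 1/2) * ω ^ (μ - 1/2) :=
        Real.mul_rpow ha.le hω0.le
      beta_reduce
      rw [hlog, hrpow]
      trans (g ω * ((a ^ (μ - 1/2) : ℝ) : ℂ) * ((ω ^ (μ - 1/2) : ℝ) : ℂ) *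
        Complex.exp (Complex.I * t * ω + Complex.I * α * ((Real.log a + Real.log ω : ℝ) : ℂ)
          + Complex.I * β * (a * ω) + ((-κ * (a * ω) : ℝ) : ℂ)))
      · rw [Complex.exp_add, Complex.exp_add, Complex.exp_add, Complex.ofReal_exp]
        push_cast
        ring
      · have harg : Complex.I * t * ω + Complex.I * α * ((Real.log a + Real.log ω : ℝ) : ℂ)
              + Complex.I * β * (a * ω) + ((-κ * (a * ω) : ℝ) : ℂ)
            = Complex.I * α * ((Real.log a : ℝ) : ℂ) + Complex.I * α * ((Real.log ω : ℝ) : ℂ)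
              + Complex.I * ω * ((t : ℂ) + a * (β + Complex.I * κ)) := by
          push_cast
          linear_combination (-(κ * a * ω) : ℂ) * Complex.I_mul_I
        rw [harg, Complex.exp_add, Complex.exp_add, hcdef]
        ring
    rw [hinteq]
    have hIoi : (∫ ω in Set.Ioi (0 : ℝ), c ω * Complex.exp (Complex.I * ω *
          ((t : ℂ) + a * (β + Complex.I * κ))))
        = PhiAux c ((t : ℂ) + a * (β + Complex.I * κ)) := by
      apply MeasureTheory.setIntegral_eq_integral_of_forall_compl_eq_zero
      intro ω hω
      simp [hcdef, hgz ω hω]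
    rw [hIoi]
    have hsq : (Real.sqrt a : ℂ) * ((a ^ (μ - 1/2) : ℝ) : ℂ) = ((a ^ μ : ℝ) : ℂ) := by
      rw [← Complex.ofReal_mul]
      congr 1
      rw [Real.sqrt_eq_rpow, ← Real.rpow_add ha]
      norm_num
    calc (Real.sqrt a : ℂ) * ((Complex.exp (Complex.I * α * Real.log a) * ((a ^ (μ - 1/2) : ℝ) : ℂ)) *
          PhiAux c ((t : ℂ) + a * (β + Complex.I * κ)))
        = ((Real.sqrt a : ℂ) * ((a ^ (μ - 1/2) : ℝ) : ℂ)) * Complex.exp (Complex.I * α * Real.log a) *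
          PhiAux c ((t : ℂ) + a * (β + Complex.I * κ)) := by ring
      _ = _ := by rw [hsq]
  -- differentiability of the profile
  have hΦd : ∀ z : ℂ, HasDerivAt (PhiAux c)
      (∫ ω : ℝ, c ω * (Complex.I * ω) * Complex.exp (Complex.I * ω * z)) z :=
    phiAux_hasDerivAt c hc hcc
  have hΦdiff : Differentiable ℂ (PhiAux c) := fun z => (hΦd z).differentiableAt
  have hΦC : ContDiff ℝ 1 (PhiAux c) := hΦdiff.contDiff.restrict_scalars ℝ
  constructor
  · -- smoothness
    have hV : ContDiffOn ℝ 1 (fun p : ℝ × ℝ => ((p.1 ^ μ : ℝ) : ℂ) *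
        Complex.exp (Complex.I * α * Real.log p.1) *
        PhiAux c ((p.2 : ℂ) + p.1 * (β + Complex.I * κ))) (Set.Ioi (0:ℝ) ×ˢ Set.univ) := by
      intro p hp
      have hp1 : (0:ℝ) < p.1 := hp.1
      apply ContDiffAt.contDiffWithinAt
      have h1 : ContDiffAt ℝ 1 (fun p : ℝ × ℝ => ((p.1 ^ μ : ℝ) : ℂ)) p :=
        Complex.ofRealCLM.contDiff.contDiffAt.comp p
          ((Real.contDiffAt_rpow_const_of_ne hp1.ne').comp p contDiffAt_fst)
      have h2 : ContDiffAt ℝ 1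
          (fun p : ℝ × ℝ => Complex.exp (Complex.I * α * Real.log p.1)) p := by
        apply Complex.contDiff_exp.contDiffAt.comp p
        exact contDiffAt_const.mul (Complex.ofRealCLM.contDiff.contDiffAt.comp p
          ((Real.contDiffAt_log.mpr hp1.ne').comp p contDiffAt_fst))
      have h3 : ContDiffAt ℝ 1
          (fun p : ℝ × ℝ => PhiAux c ((p.2 : ℂ) + p.1 * (β + Complex.I * κ))) p := by
        apply hΦC.contDiffAt.comp p
        exact ((Complex.ofRealCLM.contDiff.comp contDiff_snd).add
          ((Complex.ofRealCLM.contDiff.comp contDiff_fst).mul contDiff_const)).contDiffAt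
      exact (h1.mul h2).mul h3
    apply hV.congr
    intro p hp
    exact key p.1 hp.1 p.2
  · intro a ha t
    set z : ℂ := (t : ℂ) + a * (β + Complex.I * κ) with hzdef
    set Q : ℂ := ∫ ω : ℝ, c ω * (Complex.I * ω) * Complex.exp (Complex.I * ω * z) with hQdef
    set A : ℂ := ((a ^ μ : ℝ) : ℂ) with hAdef
    set E : ℂ := Complex.exp (Complex.I * α * Real.log a) with hEdef
    -- derivative in t
    have hut : HasDerivAt (fun t' : ℝ => ((t' : ℂ) + a * (β + Complex.I * κ))) 1 t := by
      simpa using (Complex.ofRealCLM.hasDerivAt (x := t)).add_const (↑a * (β + Complex.I * κ))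
    have h3t : HasDerivAt (fun t' : ℝ => PhiAux c ((t' : ℂ) + a * (β + Complex.I * κ))) Q t := by
      have := ((hΦd z).hasFDerivAt.restrictScalars ℝ).comp_hasDerivAt t hut
      simpa [Function.comp_def, hzdef] using this
    have hWt : HasDerivAt (fun t' : ℝ => W a t') (A * E * Q) t := by
      have heq : (fun t' : ℝ => W a t') = fun t' : ℝ =>
          (A * E) * PhiAux c ((t' : ℂ) + a * (β + Complex.I * κ)) := by
        funext t'
        rw [key a ha t']
      rw [heq]
      simpa [mul_assoc] using h3t.const_mul (A * E)
    -- derivative in a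
    have h1a : HasDerivAt (fun a' : ℝ => ((a' ^ μ : ℝ) : ℂ)) ((μ * a ^ (μ - 1) : ℝ) : ℂ) a :=
      (Real.hasDerivAt_rpow_const (Or.inl ha.ne')).ofReal_comp
    have h2a : HasDerivAt (fun a' : ℝ => Complex.exp (Complex.I * α * Real.log a'))
        (E * (Complex.I * α * ((a : ℂ))⁻¹)) a := by
      have hl : HasDerivAt Real.log a⁻¹ a := Real.hasDerivAt_log ha.ne'
      have := ((hl.ofReal_comp).const_mul (Complex.I * (α : ℂ))).cexp
      simpa [hEdef, mul_assoc, Complex.ofReal_inv] using this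
    have hua : HasDerivAt (fun a' : ℝ => ((t : ℂ) + a' * (β + Complex.I * κ)))
        ((β : ℂ) + Complex.I * κ) a := by
      have := ((Complex.ofRealCLM.hasDerivAt (x := a)).mul_const ((β : ℂ) + Complex.I * κ)).const_add (t : ℂ)
      simpa using this
    have h3a : HasDerivAt (fun a' : ℝ => PhiAux c ((t : ℂ) + a' * (β + Complex.I * κ)))
        (((β : ℂ) + Complex.I * κ) * Q) a := by
      have := ((hΦd z).hasFDerivAt.restrictScalars ℝ).comp_hasDerivAt a hua
      simpa [Function.comp_def, hzdef, smul_eq_mul] using this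
    have hWa : HasDerivAt (fun a' : ℝ => W a' t)
        ((((μ * a ^ (μ - 1) : ℝ) : ℂ) * E + A * (E * (Complex.I * α * ((a : ℂ))⁻¹))) *
          PhiAux c z + A * E * ((((β : ℂ) + Complex.I * κ)) * Q)) a := by
      have hprod := ((h1a.mul h2a).mul h3a)
      apply hprod.congr_of_eventuallyEq
      filter_upwards [Ioi_mem_nhds ha] with a' ha'
      rw [key a' ha' t]; rfl
    rw [hWa.deriv, hWt.deriv, key a ha t]
    have haA : (a : ℂ) * ((μ * a ^ (μ - 1) : ℝ) : ℂ) = (μ : ℂ) * A := by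
      rw [hAdef]
      norm_cast
      rw [Real.rpow_sub_one ha.ne']
      field_simp
    have hainv : (a : ℂ) * ((a : ℂ))⁻¹ = 1 := mul_inv_cancel₀ (by exact_mod_cast ha.ne')
    linear_combination (E * PhiAux c z) * haA + (Complex.I * α * A * E * PhiAux c z) * hainv
end

section
/- Let γ > 0 and α, β ∈ ℝ, and let Y : (0,∞) × ℝ → ℂ be continuously differentiable (in the real sense) and satisfy a ∂Y/∂a (a,t) = γ − iα − a(β − iγ) ∂Y/∂t (a,t) for all a > 0, t ∈ ℝ. Then there exists a holomorphic function F on the upper half plane {z ∈ ℂ : Im z > 0} such that Y(a,t) = (γ − iα) log a + F(t − aβ + iaγ) for all a > 0, t ∈ ℝ. That is, every solution of the structure equation is the sum of the time-independent particular solution P_γ(a) = (γ − iα) log a and a holomorphic function of z = t − aβ + iaγ. -/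
open Complex

/-- Every continuously differentiable solution of the structure equation
`a ∂Y/∂a = γ − iα − a(β − iγ) ∂Y/∂t` on `(0,∞) × ℝ` is the sum of the
time-independent particular solution `P_γ(a) = (γ − iα) log a` and a holomorphic
function `F` of `z = t − aβ + iaγ` on the upper half plane. -/
theorem structure_equation_solutions (γ α β : ℝ) (hγ : 0 < γ)
    (Y : ℝ → ℝ → ℂ)
    (hY : ContDiffOn ℝ 1 (fun p : ℝ × ℝ => Y p.1 p.2) (Set.Ioi (0 : ℝ) ×ˢ Set.univ))
    (heq : ∀ a : ℝ, 0 < a → ∀ t : ℝ,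
      (a : ℂ) * deriv (fun a' : ℝ => Y a' t) a
        = (γ : ℂ) - Complex.I * α
          - (a : ℂ) * ((β : ℂ) - Complex.I * γ) * deriv (fun t' : ℝ => Y a t') t) :
    ∃ F : ℂ → ℂ, DifferentiableOn ℂ F {z : ℂ | 0 < z.im} ∧
      ∀ a : ℝ, 0 < a → ∀ t : ℝ,
        Y a t = ((γ : ℂ) - Complex.I * α) * Real.log a
          + F ((t : ℂ) - (a : ℂ) * β + Complex.I * a * γ) := by
  set u : ℝ × ℝ → ℂ := fun p => Y p.1 p.2 with hu
  refine ⟨fun z => Y (z.im / γ) (z.re + β * z.im / γ)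
      - ((γ : ℂ) - Complex.I * α) * Real.log (z.im / γ), ?_, ?_⟩
  · intro z₀ hz₀
    have hz₀' : 0 < z₀.im := hz₀
    set a := z₀.im / γ with ha_def
    set t := z₀.re + β * z₀.im / γ with ht_def
    have ha : 0 < a := div_pos hz₀' hγ
    have hmem : ((a, t) : ℝ × ℝ) ∈ Set.Ioi (0:ℝ) ×ˢ (Set.univ : Set ℝ) := ⟨ha, trivial⟩
    have hopen : IsOpen (Set.Ioi (0:ℝ) ×ˢ (Set.univ : Set ℝ)) := isOpen_Ioi.prod isOpen_univ
    have hdiff : DifferentiableAt ℝ u (a, t) :=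
      (hY.differentiableOn one_ne_zero).differentiableAt (hopen.mem_nhds hmem)
    set D := fderiv ℝ u (a, t) with hD_def
    have hD : HasFDerivAt u D (a, t) := hdiff.hasFDerivAt
    have hA : HasDerivAt (fun a' : ℝ => Y a' t) (D (1, 0)) a := by
      have h1 : HasDerivAt (fun a' : ℝ => ((a', t) : ℝ × ℝ)) (1, 0) a :=
        (hasDerivAt_id a).prodMk (hasDerivAt_const a t)
      exact hD.comp_hasDerivAt a h1
    have hT : HasDerivAt (fun t' : ℝ => Y a t') (D (0, 1)) t := by
      have h1 : HasDerivAt (fun t' : ℝ => ((a, t') : ℝ × ℝ)) (0, 1) t :=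
        (hasDerivAt_const t a).prodMk (hasDerivAt_id t)
      exact hD.comp_hasDerivAt t h1
    set c := D (0, 1) with hc_def
    have hpde : (a:ℂ) * D (1,0)
        = (γ:ℂ) - Complex.I * α - (a:ℂ) * ((β:ℂ) - Complex.I * γ) * c := by
      have h := heq a ha t
      rwa [hA.deriv, hT.deriv] at h
    -- the linear coordinate change
    set φL : ℂ →L[ℝ] ℝ × ℝ :=
      ((γ⁻¹ : ℝ) • Complex.imCLM).prod (Complex.reCLM + ((β/γ : ℝ)) • Complex.imCLM) with hφL
    have hφ : HasFDerivAt (fun z : ℂ => ((z.im / γ, z.re + β * z.im / γ) : ℝ × ℝ)) φL z₀ := by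
      have heqfun : (fun z : ℂ => ((z.im / γ, z.re + β * z.im / γ) : ℝ × ℝ)) = φL := by
        funext z
        simp [φL, Prod.ext_iff]
        constructor <;> ring
      rw [heqfun]; exact φL.hasFDerivAt
    have hlog : HasFDerivAt (fun p : ℝ × ℝ => Real.log p.1)
        ((a⁻¹ : ℝ) • ContinuousLinearMap.fst ℝ ℝ ℝ) (a, t) :=
      (Real.hasDerivAt_log ha.ne').comp_hasFDerivAt (f := Prod.fst) (a, t)
        (hasFDerivAt_fst (𝕜 := ℝ) (E := ℝ) (F := ℝ) (p := (a, t)))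
    have hlogC : HasFDerivAt (fun p : ℝ × ℝ => ((Real.log p.1 : ℝ) : ℂ))
        (Complex.ofRealCLM.comp ((a⁻¹ : ℝ) • ContinuousLinearMap.fst ℝ ℝ ℝ)) (a, t) :=
      Complex.ofRealCLM.hasFDerivAt.comp (a, t) hlog
    have hg : HasFDerivAt (fun p : ℝ × ℝ => u p - ((γ:ℂ) - Complex.I * α) * Real.log p.1)
        (D - ((γ:ℂ) - Complex.I * α) •
          (Complex.ofRealCLM.comp ((a⁻¹ : ℝ) • ContinuousLinearMap.fst ℝ ℝ ℝ))) (a, t) :=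
      hD.sub (hlogC.const_mul _)
    have hF : HasFDerivAt (fun z : ℂ => Y (z.im / γ) (z.re + β * z.im / γ)
        - ((γ : ℂ) - Complex.I * α) * Real.log (z.im / γ))
        ((D - ((γ:ℂ) - Complex.I * α) •
          (Complex.ofRealCLM.comp ((a⁻¹ : ℝ) • ContinuousLinearMap.fst ℝ ℝ ℝ))).comp φL) z₀ :=
      hg.comp z₀ hφ
    set M := (D - ((γ:ℂ) - Complex.I * α) •
        (Complex.ofRealCLM.comp ((a⁻¹ : ℝ) • ContinuousLinearMap.fst ℝ ℝ ℝ))).comp φL with hM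
    have key : ∀ v : ℂ, M v = v * c := by
      intro v
      have h2 : M v = D (γ⁻¹ * v.im, v.re + β/γ * v.im)
          - ((γ:ℂ) - Complex.I * α) * (↑(a⁻¹ * (γ⁻¹ * v.im)) : ℂ) := by
        simp [M, φL, ContinuousLinearMap.comp_apply, ContinuousLinearMap.sub_apply,
          ContinuousLinearMap.smul_apply, smul_eq_mul]
      have h3 : D (γ⁻¹ * v.im, v.re + β/γ * v.im)
          = (γ⁻¹ * v.im : ℝ) • D (1, 0) + (v.re + β/γ * v.im : ℝ) • c := by
        have hsp : ((γ⁻¹ * v.im, v.re + β/γ * v.im) : ℝ × ℝ)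
            = (γ⁻¹ * v.im) • ((1:ℝ), (0:ℝ)) + (v.re + β/γ * v.im) • ((0:ℝ), (1:ℝ)) := by
          simp
        rw [hsp, map_add, map_smul, map_smul]
      rw [h2, h3]
      have hv : (↑v.re + ↑v.im * Complex.I : ℂ) = v := Complex.re_add_im v
      have hγ' : (γ:ℂ) ≠ 0 := by exact_mod_cast hγ.ne'
      have ha' : (a:ℂ) ≠ 0 := by exact_mod_cast ha.ne'
      simp only [Complex.real_smul, Complex.ofReal_mul, Complex.ofReal_add,
        Complex.ofReal_inv, Complex.ofReal_div]
      linear_combination (norm := skip) (↑v.im / (↑a * ↑γ) : ℂ) * hpde + c * hv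
      field_simp
      ring
    have hF2 : HasDerivAt (fun z : ℂ => Y (z.im / γ) (z.re + β * z.im / γ)
        - ((γ : ℂ) - Complex.I * α) * Real.log (z.im / γ)) c z₀ := by
      rw [hasDerivAt_iff_isLittleO]
      have h := hF.isLittleO
      simp only [key] at h
      simpa [smul_eq_mul] using h
    exact hF2.differentiableAt.differentiableWithinAt
  · intro a ha t
    have him : ((t:ℂ) - a * β + Complex.I * a * γ).im = a * γ := by simp
    have hre : ((t:ℂ) - a * β + Complex.I * a * γ).re = t - a * β := by simp
    simp only [him, hre]
    have h1 : a * γ / γ = a := mul_div_cancel_right₀ a hγ.ne'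
    have h2 : t - a * β + β * (a * γ) / γ = t := by field_simp; ring
    rw [h1, h2]
    ring
end
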